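/- Let S, A be finite sets and q : S × A → Δ(S) such that every pure Markov strategy profile a ∈ A^{|S|} induces an irreducible Markov chain with unique invariant distribution π(a) ∈ Δ(S). Let α̃ : S → ℝ^{|A|} with Σ_a α̃_s(a) = 1 for all s, and β̃ ∈ ℝ^{|S|} invariant under α̃ with q (i.e., Σ_{s,a} β̃_s α̃_s(a) q(t|s,a) = β̃_t for all t). Then there exists k : A^{|S|} → ℝ such that for every s ∈ S and a ∈ A, β̃_s α̃_s(a) = Σ_{a=(a_{s'})_{s'} : a_s = a} k(a) π_s(a). -/

import Mathlib

/-!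
Dualize: the vector `(β s * α s a)` lies in the span of the vectors `e m = (1[m s = a] * π m s)`
as soon as every `c : S × A → ℝ` orthogonal to all `e m` is orthogonal to it. Orthogonality to
`e m` says that `c(·, m ·)` has mean zero under `π m`. For one policy `m₀` this lets us solve the
Poisson equation `h - P_{m₀} h = c(·, m₀ ·)`, and single-state deviations from `m₀` then force
`c (s, a) = h s - ∑ t, q s a t * h t` for all `s, a`. Such a `c` is orthogonal to `(β s * α s a)`
precisely because `β` is invariant under `α` and `q`.
-/

open Finset Matrix

namespace Matrix

variable {n : Type*} [Fintype n] {P : Matrix n n ℝ}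

theorem dotProduct_sub_mulVec_eq_zero {w : n → ℝ} (hw : w ᵥ* P = w) (h : n → ℝ) :
    w ⬝ᵥ (h - P *ᵥ h) = 0 := by
  rw [dotProduct_sub, dotProduct_mulVec, hw, sub_self]

variable [DecidableEq n]

theorem pow_mulVec_eq_self {h : n → ℝ} (hh : P *ᵥ h = h) (k : ℕ) : (P ^ k) *ᵥ h = h := by
  induction k with
  | zero => simp
  | succ k ih => rw [pow_succ, ← mulVec_mulVec, hh, ih]

/-- Maximum principle: at a maximum `i₀` of `h`, the mean `∑ u, (P ^ k) i₀ u * h u = h i₀` forces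
`h = h i₀` at every state reachable from `i₀`. -/
theorem eq_of_mulVec_eq_self (hP : P ∈ rowStochastic ℝ n)
    (hirr : ∀ i j, ∃ k : ℕ, 0 < (P ^ k) i j) {h : n → ℝ} (hh : P *ᵥ h = h) (i j : n) :
    h i = h j := by
  obtain ⟨i₀, -, hmax⟩ := exists_max_image univ h ⟨i, mem_univ i⟩
  suffices ∀ j, h j = h i₀ by rw [this i, this j]
  intro j
  obtain ⟨k, hk⟩ := hirr i₀ j
  have hPk : P ^ k ∈ rowStochastic ℝ n := pow_mem hP k
  have hsum : ∑ u, (P ^ k) i₀ u * (h i₀ - h u) = 0 := by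
    have hmean := congrFun (pow_mulVec_eq_self hh k) i₀
    simp only [mulVec, dotProduct] at hmean
    simp only [mul_sub, sum_sub_distrib, ← sum_mul, sum_row_of_mem_rowStochastic hPk, one_mul,
      hmean, sub_self]
  have hterm := (sum_eq_zero_iff_of_nonneg fun u _ =>
    mul_nonneg (nonneg_of_mem_rowStochastic hPk) (sub_nonneg.2 (hmax u (mem_univ u)))).1 hsum j
      (mem_univ j)
  linarith [(mul_eq_zero.1 hterm).resolve_left hk.ne']

/-- The Poisson equation. The range of `1 - P` lies in the hyperplane `w ⬝ᵥ · = 0`, and the two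
have the same dimension because the kernel of `1 - P` consists of constants. -/
theorem exists_sub_mulVec_eq (hP : P ∈ rowStochastic ℝ n)
    (hirr : ∀ i j, ∃ k : ℕ, 0 < (P ^ k) i j) {w : n → ℝ} (hw : w ᵥ* P = w)
    (hw1 : ∑ i, w i = 1) {c : n → ℝ} (hc : w ⬝ᵥ c = 0) : ∃ h, h - P *ᵥ h = c := by
  obtain ⟨i₀, -⟩ := exists_ne_zero_of_sum_ne_zero (hw1 ▸ one_ne_zero : ∑ i, w i ≠ 0)
  let L : (n → ℝ) →ₗ[ℝ] n → ℝ := LinearMap.id - P.mulVecLin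
  let φ : (n → ℝ) →ₗ[ℝ] ℝ := dotProductBilin ℝ ℝ w
  have hker : LinearMap.ker L ≤ ℝ ∙ 1 := by
    intro v hv
    have hPv : P *ᵥ v = v := (sub_eq_zero.1 hv).symm
    refine Submodule.mem_span_singleton.2 ⟨v i₀, funext fun i => ?_⟩
    simp [eq_of_mulVec_eq_self hP hirr hPv i i₀]
  have hrange : LinearMap.range φ = ⊤ :=
    LinearMap.range_eq_top.2 fun r => ⟨r • 1, by simp [φ, dotProduct_one, hw1]⟩
  have hle : LinearMap.range L ≤ LinearMap.ker φ := by
    rintro - ⟨v, rfl⟩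
    exact dotProduct_sub_mulVec_eq_zero hw v
  have hL := LinearMap.finrank_range_add_finrank_ker L
  have hφ := LinearMap.finrank_range_add_finrank_ker φ
  have hker1 : Module.finrank ℝ (LinearMap.ker L) ≤ 1 :=
    (Submodule.finrank_mono hker).trans ((finrank_span_le_card _).trans (by simp))
  rw [hrange, finrank_top, Module.finrank_self] at hφ
  obtain ⟨h, hh⟩ : c ∈ LinearMap.range L := by
    rw [Submodule.eq_of_le_of_finrank_le hle (by omega)]
    exact hc
  exact ⟨h, hh⟩

end Matrix

theorem Submodule.mem_span_of_forall_dotProduct_eq_zero {ι K : Type*} [Fintype ι] [Field K]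
    [DecidableEq ι] {s : Set (ι → K)} {x : ι → K}
    (hx : ∀ c : ι → K, (∀ v ∈ s, c ⬝ᵥ v = 0) → c ⬝ᵥ x = 0) : x ∈ Submodule.span K s := by
  by_contra hxs
  obtain ⟨f, hfx, hf⟩ := Submodule.exists_dual_map_eq_bot_of_notMem hxs inferInstance
  have hfc (v : ι → K) : f v = (fun i => f fun j => if i = j then 1 else 0) ⬝ᵥ v := by
    simp [LinearMap.pi_apply_eq_sum_univ f v, dotProduct, mul_comm]
  refine hfx ((hfc x).trans (hx _ fun v hv => ?_))
  rw [← hfc, ← Submodule.mem_bot K, ← hf]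
  exact Submodule.mem_map_of_mem (Submodule.subset_span hv)

section MarkovDecisionProcess

variable {S A : Type*}

def transitionMatrix (q : S → A → S → ℝ) (m : S → A) : Matrix S S ℝ :=
  Matrix.of fun s t => q s (m s) t

variable [Fintype S]

theorem sum_sum_mul_sub_sum_mul_eq_zero [Fintype A] {q : S → A → S → ℝ} {α : S → A → ℝ}
    (hα : ∀ s, ∑ a, α s a = 1) {β : S → ℝ}
    (hβ : ∀ t, ∑ s, ∑ a, β s * α s a * q s a t = β t) (h : S → ℝ) :
    ∑ s, ∑ a, β s * α s a * (h s - ∑ t, q s a t * h t) = 0 := by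
  calc ∑ s, ∑ a, β s * α s a * (h s - ∑ t, q s a t * h t)
      = ∑ s, β s * (∑ a, α s a) * h s - ∑ t, (∑ s, ∑ a, β s * α s a * q s a t) * h t := by
        simp only [mul_sub, sum_sub_distrib, mul_sum, sum_mul]
        congr 1
        rw [sum_congr rfl fun s _ => sum_comm, sum_comm]
        simp only [mul_assoc]
    _ = 0 := by simp [hα, hβ]

variable [DecidableEq S]

theorem transitionMatrix_mem_rowStochastic {q : S → A → S → ℝ} (hq0 : ∀ s a t, 0 ≤ q s a t)
    (hq1 : ∀ s a, ∑ t, q s a t = 1) (m : S → A) : transitionMatrix q m ∈ rowStochastic ℝ S :=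
  mem_rowStochastic_iff_sum.2 ⟨fun _ _ => hq0 _ _ _, fun _ => hq1 _ _⟩

/-- Deviate from `m₀` in the single state `s`. -/
theorem eq_zero_of_forall_sum_mul_eq_zero {π : (S → A) → S → ℝ}
    (hπpos : ∀ m s, 0 < π m s) {d : S → A → ℝ} {m₀ : S → A} (hd₀ : ∀ s, d s (m₀ s) = 0)
    (hd : ∀ m, ∑ s, π m s * d s (m s) = 0) (s : S) (a : A) : d s a = 0 := by
  have hdev := hd (Function.update m₀ s a)
  rw [sum_eq_single s (fun t _ hts => by simp [Function.update_of_ne hts, hd₀]) (by simp)]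
    at hdev
  simpa [(hπpos _ s).ne'] using hdev

theorem exists_eq_sub_sum_mul_of_forall_sum_mul_eq_zero [Nonempty A] {q : S → A → S → ℝ}
    (hq : ∀ m, transitionMatrix q m ∈ rowStochastic ℝ S) {π : (S → A) → S → ℝ}
    (hπpos : ∀ m s, 0 < π m s) (hπsum : ∀ m, ∑ s, π m s = 1)
    (hinv : ∀ m, π m ᵥ* transitionMatrix q m = π m)
    (hirr : ∀ m s t, ∃ k : ℕ, 0 < (transitionMatrix q m ^ k) s t) {c : S → A → ℝ}
    (hc : ∀ m, ∑ s, π m s * c s (m s) = 0) :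
    ∃ h : S → ℝ, ∀ s a, c s a = h s - ∑ t, q s a t * h t := by
  let m₀ : S → A := fun _ => Classical.arbitrary A
  obtain ⟨h, hh⟩ := exists_sub_mulVec_eq (hq m₀) (hirr m₀) (hinv m₀) (hπsum m₀) (hc m₀)
  let d : S → A → ℝ := fun s a => c s a - (h s - ∑ t, q s a t * h t)
  have hd₀ (s : S) : d s (m₀ s) = 0 := by
    simp [d, ← congrFun hh s, transitionMatrix, mulVec, dotProduct]
  have hd (m : S → A) : ∑ s, π m s * d s (m s) = 0 := by
    have hmean := dotProduct_sub_mulVec_eq_zero (hinv m) h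
    simp only [dotProduct, mulVec, transitionMatrix, of_apply, Pi.sub_apply] at hmean
    calc ∑ s, π m s * d s (m s)
        = ∑ s, π m s * c s (m s) - ∑ s, π m s * (h s - ∑ t, q s (m s) t * h t) := by
          simp only [d, mul_sub _ (c _ _), sum_sub_distrib]
      _ = 0 := by rw [hc m, hmean, sub_zero]
  exact ⟨h, fun s a => sub_eq_zero.1 (eq_zero_of_forall_sum_mul_eq_zero hπpos hd₀ hd s a)⟩

end MarkovDecisionProcess

theorem stmt_1_general {S A : Type} [Fintype S] [DecidableEq S]
    [Fintype A] [DecidableEq A] [Nonempty A]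
    (q : S → A → S → ℝ)
    (hq0 : ∀ s a t, 0 ≤ q s a t) (hq1 : ∀ s a, ∑ t, q s a t = 1)
    (π : (S → A) → S → ℝ)
    (hπpos : ∀ m s, 0 < π m s)
    (hπsum : ∀ m, ∑ s, π m s = 1)
    (hinv : ∀ m : S → A, ∀ t, ∑ s, π m s * q s (m s) t = π m t)
    (hirr : ∀ m : S → A, ∀ s t : S, ∃ n : ℕ, 0 < n ∧
      0 < ((Matrix.of fun s' t' => q s' (m s') t') ^ n) s t)
    (α : S → A → ℝ) (hα : ∀ s, ∑ a, α s a = 1)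
    (β : S → ℝ) (hβ : ∀ t, ∑ s, ∑ a, β s * α s a * q s a t = β t) :
    ∃ k : (S → A) → ℝ, ∀ s a,
      β s * α s a = ∑ m ∈ Finset.univ.filter (fun m : S → A => m s = a), k m * π m s := by
  let e : (S → A) → S × A → ℝ := fun m p => if m p.1 = p.2 then π m p.1 else 0
  have hspan : (fun p : S × A => β p.1 * α p.1 p.2) ∈ Submodule.span ℝ (Set.range e) := by
    refine Submodule.mem_span_of_forall_dotProduct_eq_zero fun c hc => ?_
    have hc' (m : S → A) : ∑ s, π m s * c (s, m s) = 0 := by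
      rw [← hc (e m) ⟨m, rfl⟩]
      simp [e, dotProduct, Fintype.sum_prod_type, mul_comm]
    obtain ⟨h, hh⟩ := exists_eq_sub_sum_mul_of_forall_sum_mul_eq_zero
      (transitionMatrix_mem_rowStochastic hq0 hq1) hπpos hπsum (fun m => funext (hinv m))
      (fun m s t => (hirr m s t).imp fun _ => And.right) (c := fun s a => c (s, a)) hc'
    rw [← sum_sum_mul_sub_sum_mul_eq_zero hα hβ h]
    simp [dotProduct, Fintype.sum_prod_type, hh, mul_comm]
  obtain ⟨k, hk⟩ := (Submodule.mem_span_range_iff_exists_fun ℝ).1 hspan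
  refine ⟨k, fun s a => ?_⟩
  simpa [e, sum_filter] using (congrFun hk (s, a)).symm

theorem stmt_1 {S A : Type} [Fintype S] [DecidableEq S] [Nonempty S]
    [Fintype A] [DecidableEq A] [Nonempty A]
    (q : S → A → S → ℝ)
    (hq0 : ∀ s a t, 0 ≤ q s a t) (hq1 : ∀ s a, ∑ t, q s a t = 1)
    (π : (S → A) → S → ℝ)
    (hπpos : ∀ m s, 0 < π m s)
    (hπsum : ∀ m, ∑ s, π m s = 1)
    (hinv : ∀ m : S → A, ∀ t, ∑ s, π m s * q s (m s) t = π m t)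
    (hirr : ∀ m : S → A, ∀ s t : S, ∃ n : ℕ, 0 < n ∧
      0 < ((Matrix.of fun s' t' => q s' (m s') t') ^ n) s t)
    (α : S → A → ℝ) (hα : ∀ s, ∑ a, α s a = 1)
    (β : S → ℝ) (hβ : ∀ t, ∑ s, ∑ a, β s * α s a * q s a t = β t) :
    ∃ k : (S → A) → ℝ, ∀ s a,
      β s * α s a = ∑ m ∈ Finset.univ.filter (fun m : S → A => m s = a), k m * π m s :=
  stmt_1_general q hq0 hq1 π hπpos hπsum hinv hirr α hα β hβ
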